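/- arXiv:2310.18945 — 3 statements merged into one kernel-verified Lean document; each statement's English description precedes it below -/
import Mathlib

section
/- Let q be a finite-dimensional complex Lie algebra and a ⊆ q an abelian Lie subalgebra. Then (1) dim a ≤ b(q) = (dim q + ind q)/2; and (2) if dim a = b(q), then q^ξ ⊆ a for every regular ξ ∈ q*; in particular the Frobenius semiradical F(q) is contained in a. -/
open Module LieAlgebra

noncomputable section

/-- The stabiliser `q^ξ = {x : q | ξ([x, q]) = 0}` of `ξ ∈ q*` for the coadjoint
representation of a Lie algebra `q`. -/
def coadStab (𝕜 : Type*) (Q : Type*) [CommRing 𝕜] [LieRing Q] [LieAlgebra 𝕜 Q]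
    (ξ : Module.Dual 𝕜 Q) : Submodule 𝕜 Q where
  carrier := {x | ∀ y, ξ ⁅x, y⁆ = 0}
  add_mem' := by
    intro a b ha hb y
    rw [Set.mem_setOf_eq] at ha hb
    rw [add_lie, map_add, ha y, hb y, add_zero]
  zero_mem' := by intro y; rw [zero_lie, map_zero]
  smul_mem' := by
    intro c x hx y
    rw [Set.mem_setOf_eq] at hx
    rw [smul_lie, map_smul, hx y, smul_zero]

/-- The index of a Lie algebra: the minimal dimension of a coadjoint stabiliser. -/
def lieIndex (𝕜 : Type*) (Q : Type*) [CommRing 𝕜] [LieRing Q] [LieAlgebra 𝕜 Q] : ℕ :=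
  ⨅ ξ : Module.Dual 𝕜 Q, Module.finrank 𝕜 (coadStab 𝕜 Q ξ)

/-- `ξ ∈ q*` is regular if its stabiliser has minimal dimension. -/
def IsRegularDual (𝕜 : Type*) (Q : Type*) [CommRing 𝕜] [LieRing Q] [LieAlgebra 𝕜 Q]
    (ξ : Module.Dual 𝕜 Q) : Prop :=
  Module.finrank 𝕜 (coadStab 𝕜 Q ξ) = lieIndex 𝕜 Q

/-- The Frobenius semiradical `F(q) = Σ_{ξ regular} q^ξ`. -/
def frobeniusSemiradical (𝕜 : Type*) (Q : Type*) [CommRing 𝕜] [LieRing Q] [LieAlgebra 𝕜 Q] :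
    Submodule 𝕜 Q :=
  ⨆ ξ : {ξ : Module.Dual 𝕜 Q // IsRegularDual 𝕜 Q ξ}, coadStab 𝕜 Q ξ.1

section Key
open LinearMap

lemma key {V : Type*} [AddCommGroup V] [Module ℂ V] [FiniteDimensional ℂ V]
    (B : V →ₗ[ℂ] V →ₗ[ℂ] ℂ) (halt : ∀ x, B x x = 0) (W r : Submodule ℂ V)
    (hr : ∀ x, x ∈ r ↔ ∀ y, B x y = 0) (hW : ∀ x ∈ W, ∀ y ∈ W, B x y = 0) :
    2 * finrank ℂ W + finrank ℂ r ≤ finrank ℂ V + 2 * finrank ℂ (W ⊓ r : Submodule ℂ V) := by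
  have hskew : ∀ x y, B x y = - B y x := by
    intro x y
    have h := halt (x + y)
    simp [map_add, halt x, halt y] at h
    linear_combination h
  set ψ : V →ₗ[ℂ] Module.Dual ℂ W := B.compl₂ W.subtype with hψ
  set ψt : W →ₗ[ℂ] Module.Dual ℂ V := ψ.dualMap ∘ₗ Module.Dual.eval ℂ W with hψt
  have hψtapp : ∀ (w : W) (x : V), ψt w x = B x w := by intro w x; rfl
  have hker_t : ker ψt = Submodule.comap W.subtype r := by
    ext w
    simp only [mem_ker, Submodule.mem_comap]
    constructor
    · intro h
      rw [hr]
      intro y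
      have h1 : B y (w : V) = 0 := by
        have : ψt w y = 0 := by rw [h]; rfl
        rwa [hψtapp] at this
      show B (w : V) y = 0
      rw [hskew, h1, neg_zero]
    · intro h
      ext x
      show B x (w : V) = 0
      rw [hskew, (hr (w : V)).1 h x, neg_zero]
  have hkt : finrank ℂ (ker ψt) = finrank ℂ (W ⊓ r : Submodule ℂ V) := by
    have h := (Submodule.equivMapOfInjective W.subtype W.injective_subtype
      (Submodule.comap W.subtype r)).finrank_eq
    rw [Submodule.map_comap_subtype] at h
    rw [hker_t, h]
  have hrank : finrank ℂ (range ψt) = finrank ℂ (range ψ) := by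
    rw [hψt]
    have : range (ψ.dualMap ∘ₗ Module.Dual.eval ℂ W) = range ψ.dualMap := by
      apply LinearMap.range_comp_of_range_eq_top
      rw [LinearMap.range_eq_top]
      rw [← Module.evalEquiv_toLinearMap]
      exact (Module.evalEquiv ℂ W).surjective
    rw [this, LinearMap.finrank_range_dualMap_eq_finrank_range]
  have hsub : W ⊔ r ≤ ker ψ := by
    apply sup_le
    · intro x hx
      rw [mem_ker]
      ext w
      exact hW x hx w w.2
    · intro x hx
      rw [mem_ker]
      ext w
      exact (hr x).1 hx w
  have h1 : finrank ℂ (range ψ) + finrank ℂ (ker ψ) = finrank ℂ V :=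
    LinearMap.finrank_range_add_finrank_ker ψ
  have h2 : finrank ℂ (range ψt) + finrank ℂ (ker ψt) = finrank ℂ W :=
    LinearMap.finrank_range_add_finrank_ker ψt
  have h3 : finrank ℂ (W ⊔ r : Submodule ℂ V) + finrank ℂ (W ⊓ r : Submodule ℂ V)
      = finrank ℂ W + finrank ℂ r := Submodule.finrank_sup_add_finrank_inf_eq W r
  have h4 : finrank ℂ (W ⊔ r : Submodule ℂ V) ≤ finrank ℂ (ker ψ) :=
    Submodule.finrank_mono hsub
  omega

end Key

/-- Let `q` be a finite-dimensional complex Lie algebra and `a ⊆ q` an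
abelian Lie subalgebra. Then (1) `dim a ≤ b(q) = (dim q + ind q)/2`, i.e.
`2 dim a ≤ dim q + ind q`; and (2) if `dim a = b(q)`, then `q^ξ ⊆ a` for every regular
`ξ ∈ q*`; in particular the Frobenius semiradical `F(q)` is contained in `a`. -/


theorem abelian_dim_le_b_and_stab_le_of_eq
    {Q : Type*} [LieRing Q] [LieAlgebra ℂ Q] [FiniteDimensional ℂ Q]
    (a : LieSubalgebra ℂ Q) (ha : ∀ x ∈ a, ∀ y ∈ a, ⁅x, y⁆ = 0) :
    2 * Module.finrank ℂ a.toSubmodule ≤ Module.finrank ℂ Q + lieIndex ℂ Q ∧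
    (2 * Module.finrank ℂ a.toSubmodule = Module.finrank ℂ Q + lieIndex ℂ Q →
      (∀ ξ : Module.Dual ℂ Q, IsRegularDual ℂ Q ξ → coadStab ℂ Q ξ ≤ a.toSubmodule) ∧
      frobeniusSemiradical ℂ Q ≤ a.toSubmodule) := by
  set W := a.toSubmodule with hWdef
  -- the bilinear form attached to ξ
  have main : ∀ ξ : Module.Dual ℂ Q, IsRegularDual ℂ Q ξ →
      2 * Module.finrank ℂ W + lieIndex ℂ Q ≤
        Module.finrank ℂ Q + 2 * Module.finrank ℂ (W ⊓ coadStab ℂ Q ξ : Submodule ℂ Q) := by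
    intro ξ hξ
    set B : Q →ₗ[ℂ] Q →ₗ[ℂ] ℂ := LinearMap.mk₂ ℂ (fun x y => ξ ⁅x, y⁆)
      (fun x y z => by simp [add_lie])
      (fun c x y => by simp [smul_lie])
      (fun x y z => by simp [lie_add])
      (fun c x y => by simp [lie_smul]) with hB
    have halt : ∀ x, B x x = 0 := fun x => by simp [hB]
    have hr : ∀ x, x ∈ coadStab ℂ Q ξ ↔ ∀ y, B x y = 0 := fun x => Iff.rfl
    have hW : ∀ x ∈ W, ∀ y ∈ W, B x y = 0 := by
      intro x hx y hy
      show ξ ⁅x, y⁆ = 0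
      rw [ha x hx y hy, map_zero]
    have := key B halt W (coadStab ℂ Q ξ) hr hW
    rwa [hξ] at this
  -- a regular element exists
  obtain ⟨ξ₀, hξ₀⟩ : ∃ ξ : Module.Dual ℂ Q, IsRegularDual ℂ Q ξ := by
    have : lieIndex ℂ Q ∈ Set.range
        (fun ξ : Module.Dual ℂ Q => Module.finrank ℂ (coadStab ℂ Q ξ)) :=
      Nat.sInf_mem (Set.range_nonempty _)
    obtain ⟨ξ, hξ⟩ := this
    exact ⟨ξ, hξ⟩
  have part2 : 2 * Module.finrank ℂ W = Module.finrank ℂ Q + lieIndex ℂ Q →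
      ∀ ξ : Module.Dual ℂ Q, IsRegularDual ℂ Q ξ → coadStab ℂ Q ξ ≤ W := by
    intro heq ξ hξ
    have h1 := main ξ hξ
    have h2 : Module.finrank ℂ (W ⊓ coadStab ℂ Q ξ : Submodule ℂ Q) ≤
        Module.finrank ℂ (coadStab ℂ Q ξ) := Submodule.finrank_mono inf_le_right
    have h3 : Module.finrank ℂ (coadStab ℂ Q ξ) ≤
        Module.finrank ℂ (W ⊓ coadStab ℂ Q ξ : Submodule ℂ Q) := by
      rw [hξ]; omega
    have h4 : (W ⊓ coadStab ℂ Q ξ : Submodule ℂ Q) = coadStab ℂ Q ξ :=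
      Submodule.eq_of_le_of_finrank_le inf_le_right h3
    rw [← h4]
    exact inf_le_left
  constructor
  · have h2 : Module.finrank ℂ (W ⊓ coadStab ℂ Q ξ₀ : Submodule ℂ Q) ≤
        Module.finrank ℂ (coadStab ℂ Q ξ₀) := Submodule.finrank_mono inf_le_right
    have h1 := main ξ₀ hξ₀
    rw [hξ₀] at h2
    omega
  · intro heq
    refine ⟨part2 heq, ?_⟩
    exact iSup_le fun ξ => part2 heq ξ.1 ξ.2

end
end

section
/- Let q be the Lie algebra of a connected algebraic group Q over ℂ. If the coadjoint representation (q : q*) has a generic stabiliser and ξ ∈ q* is any generic point, then the Frobenius semiradical F(q) equals the ideal of q generated by the single stabiliser q^ξ. -/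
open Module LieAlgebra

noncomputable section

/-- The Zariski topology on a complex vector space: generated by the complements of zero
sets of polynomial functions (elements of the subalgebra of functions generated by the
linear functionals). -/
def zariskiTop (V : Type*) [AddCommGroup V] [Module ℂ V] : TopologicalSpace V :=
  TopologicalSpace.generateFrom
    {U : Set V | ∃ p ∈ Algebra.adjoin ℂ (Set.range fun l : Module.Dual ℂ V => (l : V → ℂ)),
      U = {v | p v ≠ 0}}

/-- Zariski-open subset of a complex vector space. -/
def zOpen {V : Type*} [AddCommGroup V] [Module ℂ V] (s : Set V) : Prop :=
  (zariskiTop V).IsOpen s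

/-- Zariski-dense subset of a complex vector space. -/
def zDense {V : Type*} [AddCommGroup V] [Module ℂ V] (s : Set V) : Prop :=
  @Dense V (zariskiTop V) s

namespace FrobAux

variable {V W : Type*} [AddCommGroup V] [Module ℂ V] [AddCommGroup W] [Module ℂ W]

/-- If some `k×k` "minor" is nonzero then the rank of `A` is at least `k`. -/
lemma le_finrank_range_of_det_ne_zero [FiniteDimensional ℂ V] [FiniteDimensional ℂ W]
    (A : V →ₗ[ℂ] W) {k : ℕ} (v : Fin k → V) (f : Fin k → Module.Dual ℂ W)
    (h : (Matrix.of fun i j => f i (A (v j))).det ≠ 0) :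
    k ≤ finrank ℂ (LinearMap.range A) := by
  set M : Matrix (Fin k) (Fin k) ℂ := Matrix.of fun i j => f i (A (v j)) with hMdef
  have hM : IsUnit M := (Matrix.isUnit_iff_isUnit_det M).2 (isUnit_iff_ne_zero.2 h)
  set L : (Fin k → ℂ) →ₗ[ℂ] V := (Pi.basisFun ℂ (Fin k)).constr ℂ v with hLdef
  set N : W →ₗ[ℂ] (Fin k → ℂ) := LinearMap.pi f with hNdef
  have hML : M.mulVecLin = N ∘ₗ (A ∘ₗ L) := by
    apply (Pi.basisFun ℂ (Fin k)).ext
    intro j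
    have hL : L ((Pi.basisFun ℂ (Fin k)) j) = v j := Basis.constr_basis _ _ _ _
    rw [LinearMap.comp_apply, LinearMap.comp_apply, hL, Pi.basisFun_apply,
      Matrix.mulVecLin_apply, Matrix.mulVec_single]
    funext i
    simp [hMdef, hNdef]
  have hsurj : Function.Surjective M.mulVecLin := by
    obtain ⟨u, hu⟩ := hM
    intro y
    refine ⟨(↑u⁻¹ : Matrix (Fin k) (Fin k) ℂ).mulVecLin y, ?_⟩
    have h2 : M.mulVecLin ((↑u⁻¹ : Matrix (Fin k) (Fin k) ℂ).mulVecLin y) =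
        (M * (↑u⁻¹ : Matrix (Fin k) (Fin k) ℂ)).mulVecLin y := by
      rw [Matrix.mulVecLin_mul]; rfl
    rw [h2, ← hu, Units.mul_inv, Matrix.mulVecLin_one, LinearMap.id_apply]
  have htop : LinearMap.range (N ∘ₗ (A ∘ₗ L)) = ⊤ := by
    rw [← hML]; exact LinearMap.range_eq_top.2 hsurj
  have h1 : (k : ℕ) = finrank ℂ (LinearMap.range (N ∘ₗ (A ∘ₗ L))) := by
    rw [htop, finrank_top, finrank_fin_fun]
  rw [h1, LinearMap.range_comp]
  calc finrank ℂ (Submodule.map N (LinearMap.range (A ∘ₗ L)))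
      ≤ finrank ℂ (LinearMap.range (A ∘ₗ L)) := Submodule.finrank_map_le N _
    _ ≤ finrank ℂ (LinearMap.range A) :=
        Submodule.finrank_mono (LinearMap.range_comp_le_range L A)

/-- Conversely, if the rank of `A` is at least `k` then some `k×k` minor is nonzero. -/
lemma exists_det_ne_zero_of_le_finrank_range [FiniteDimensional ℂ V] [FiniteDimensional ℂ W]
    (A : V →ₗ[ℂ] W) {k : ℕ} (h : k ≤ finrank ℂ (LinearMap.range A)) :
    ∃ (v : Fin k → V) (f : Fin k → Module.Dual ℂ W),
      (Matrix.of fun i j => f i (A (v j))).det ≠ 0 := by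
  obtain ⟨w', hw'⟩ := exists_linearIndependent_of_le_finrank (R := ℂ)
    (M := LinearMap.range A) (n := k) h
  have hw : LinearIndependent ℂ (fun j => ((w' j : W))) :=
    hw'.map' (LinearMap.range A).subtype (Submodule.ker_subtype _)
  have hmem : ∀ j, ∃ x, A x = (w' j : W) := fun j => LinearMap.mem_range.mp (w' j).2
  choose v hv using hmem
  set Lw : (Fin k → ℂ) →ₗ[ℂ] W := (Pi.basisFun ℂ (Fin k)).constr ℂ (fun j => (w' j : W))
    with hLwdef
  have hker : LinearMap.ker Lw = ⊥ := by
    rw [LinearMap.ker_eq_bot']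
    intro x hx
    have hx' : ∑ i, x i • ((w' i : W)) = 0 := by
      rw [← hx, hLwdef, Basis.constr_apply_fintype, Pi.basisFun_equivFun]; rfl
    funext i
    exact Fintype.linearIndependent_iff.mp hw x hx' i
  obtain ⟨g, hg⟩ := Lw.exists_leftInverse_of_injective hker
  refine ⟨v, fun i => (LinearMap.proj i) ∘ₗ g, ?_⟩
  have hgw : ∀ j, g ((w' j : W)) = Pi.single j 1 := by
    intro j
    have hj : (w' j : W) = Lw ((Pi.basisFun ℂ (Fin k)) j) := by
      rw [hLwdef, Basis.constr_basis]
    rw [hj, ← LinearMap.comp_apply, hg, LinearMap.id_apply, Pi.basisFun_apply]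
  have hmat : (Matrix.of fun i j => ((LinearMap.proj i) ∘ₗ g) (A (v j))) =
      (1 : Matrix (Fin k) (Fin k) ℂ) := by
    ext i j
    have he : ((LinearMap.proj i) ∘ₗ g) (A (v j)) = (Pi.single j (1 : ℂ) : Fin k → ℂ) i := by
      rw [LinearMap.comp_apply, hv, hgw]; rfl
    rw [Matrix.of_apply, he]
    simp [Pi.single_apply, Matrix.one_apply, eq_comm]
  rw [hmat, Matrix.det_one]
  exact one_ne_zero

/-- The set of points where a polynomially-parametrised linear map has rank at least `k`
is Zariski-open. -/
lemma zOpen_rank [FiniteDimensional ℂ V] [FiniteDimensional ℂ W]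
    (A : Module.Dual ℂ V → (V →ₗ[ℂ] W))
    (hA : ∀ (v : V) (φ : Module.Dual ℂ W),
      (fun η : Module.Dual ℂ V => φ (A η v)) ∈
        Algebra.adjoin ℂ (Set.range fun l : Module.Dual ℂ (Module.Dual ℂ V) =>
          (l : Module.Dual ℂ V → ℂ))) (k : ℕ) :
    zOpen {η : Module.Dual ℂ V | k ≤ finrank ℂ (LinearMap.range (A η))} := by
  classical
  set P : Subalgebra ℂ (Module.Dual ℂ V → ℂ) :=
    Algebra.adjoin ℂ (Set.range fun l : Module.Dual ℂ (Module.Dual ℂ V) =>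
      (l : Module.Dual ℂ V → ℂ)) with hPdef
  have hset : {η : Module.Dual ℂ V | k ≤ finrank ℂ (LinearMap.range (A η))} =
      ⋃ p : (Fin k → V) × (Fin k → Module.Dual ℂ W),
        {η : Module.Dual ℂ V |
          (Matrix.of fun i j => p.2 i ((A η) (p.1 j))).det ≠ 0} := by
    ext η
    simp only [Set.mem_iUnion, Set.mem_setOf_eq]
    constructor
    · intro h
      obtain ⟨v, f, hd⟩ := exists_det_ne_zero_of_le_finrank_range (A η) h
      exact ⟨(v, f), hd⟩
    · rintro ⟨⟨v, f⟩, hd⟩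
      exact le_finrank_range_of_det_ne_zero (A η) v f hd
  show (zariskiTop (Module.Dual ℂ V)).IsOpen _
  letI : TopologicalSpace (Module.Dual ℂ V) := zariskiTop (Module.Dual ℂ V)
  show IsOpen _
  rw [hset]
  apply isOpen_iUnion
  rintro ⟨v, f⟩
  set N : Matrix (Fin k) (Fin k) P :=
    Matrix.of fun i j =>
      (⟨fun η : Module.Dual ℂ V => f i ((A η) (v j)), hA (v j) (f i)⟩ : P) with hNdef
  have hdet : ∀ η : Module.Dual ℂ V, ((N.det : P) : Module.Dual ℂ V → ℂ) η =
      (Matrix.of fun i j => f i ((A η) (v j))).det := by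
    intro η
    have hev : ∀ x : P, ((Pi.evalRingHom (fun _ : Module.Dual ℂ V => ℂ) η).comp
        (P.val.toRingHom)) x = (x : Module.Dual ℂ V → ℂ) η := fun x => rfl
    rw [← hev N.det, RingHom.map_det]
    congr 1
  apply TopologicalSpace.GenerateOpen.basic
  refine ⟨((N.det : P) : Module.Dual ℂ V → ℂ), (N.det : P).2, ?_⟩
  ext η
  simp only [Set.mem_setOf_eq, hdet η]

variable {Q : Type*} [LieRing Q] [LieAlgebra ℂ Q]

lemma mem_coadStab {ξ : Module.Dual ℂ Q} {x : Q} :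
    x ∈ coadStab ℂ Q ξ ↔ ∀ y, ξ ⁅x, y⁆ = 0 := Iff.rfl

/-- The coadjoint "structure map" `η ↦ (x ↦ η ∘ ad x)`, linear in `η`. -/
def Bmap (Q : Type*) [LieRing Q] [LieAlgebra ℂ Q] :
    Module.Dual ℂ Q →ₗ[ℂ] (Q →ₗ[ℂ] Module.Dual ℂ Q) where
  toFun η :=
    { toFun := fun x =>
        { toFun := fun y => η ⁅x, y⁆
          map_add' := by intro a b; simp [lie_add]
          map_smul' := by intro c a; simp [lie_smul] }
      map_add' := by intro a b; ext y; simp [add_lie]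
      map_smul' := by intro c a; ext y; simp [smul_lie] }
  map_add' := by intro η η'; ext x y; simp
  map_smul' := by intro c η; ext x y; simp

@[simp] lemma Bmap_apply (η : Module.Dual ℂ Q) (x y : Q) :
    Bmap Q η x y = η ⁅x, y⁆ := rfl

lemma ker_Bmap (η : Module.Dual ℂ Q) :
    LinearMap.ker (Bmap Q η) = coadStab ℂ Q η := by
  ext x
  simp only [LinearMap.mem_ker, mem_coadStab]
  constructor
  · intro h y
    have := congrArg (fun φ : Module.Dual ℂ Q => φ y) h
    simpa using this
  · intro h
    ext y
    simpa using h y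

end FrobAux

open FrobAux

/-- Let `q` be the Lie algebra of a connected algebraic group `Q` over `ℂ`
(here: `Q` acts on `q` by Lie-algebra automorphisms `ρ`, in such a way that the `Q`-stable
subspaces of `q` are exactly the Lie ideals — this characterises connected groups with
Lie algebra `q`).  If the coadjoint representation has a generic stabiliser and
`ξ ∈ q*` is any generic point, then the Frobenius semiradical `F(q)` equals the
ideal of `q` generated by the single stabiliser `q^ξ`. -/
theorem frobeniusSemiradical_eq_ideal_span_of_generic
    {Q : Type*} [LieRing Q] [LieAlgebra ℂ Q] [FiniteDimensional ℂ Q]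
    {G : Type*} [Group G] (ρ : G →* Module.End ℂ Q)
    (hbr : ∀ (g : G) (x y : Q), ρ g ⁅x, y⁆ = ⁅ρ g x, ρ g y⁆)
    (hconn : ∀ W : Submodule ℂ Q,
      (∀ g : G, W.map (ρ g) = W) ↔ (∀ x : Q, ∀ w ∈ W, ⁅x, w⁆ ∈ W))
    (ξ : Module.Dual ℂ Q)
    (hgen : ∃ Ω : Set (Module.Dual ℂ Q), zOpen Ω ∧ zDense Ω ∧ ξ ∈ Ω ∧
      ∀ η ∈ Ω, ∃ g : G, (coadStab ℂ Q ξ).map (ρ g) = coadStab ℂ Q η) :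
    frobeniusSemiradical ℂ Q =
      (LieSubmodule.lieSpan ℂ Q ((coadStab ℂ Q ξ : Set Q))).toSubmodule := by
  classical
  obtain ⟨Ω, hΩopen, hΩdense, hξΩ, hΩconj⟩ := hgen
  -- basic facts about the action
  have hinv : ∀ (g : G) (x : Q), ρ g⁻¹ (ρ g x) = x := by
    intro g x
    have : (ρ g⁻¹ * ρ g) x = x := by
      rw [← map_mul, inv_mul_cancel, map_one]; rfl
    simpa [Module.End.mul_apply] using this
  have hinv' : ∀ (g : G) (x : Q), ρ g (ρ g⁻¹ x) = x := by
    intro g x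
    have := hinv g⁻¹ x
    rwa [inv_inv] at this
  -- conjugation of stabilisers
  have hstabmap : ∀ (g : G) (η : Module.Dual ℂ Q),
      (coadStab ℂ Q η).map (ρ g) = coadStab ℂ Q (η ∘ₗ ρ g⁻¹) := by
    intro g η
    apply le_antisymm
    · rintro x ⟨z, hz, rfl⟩
      intro y
      have : (η ∘ₗ ρ g⁻¹) ⁅ρ g z, y⁆ = η ⁅z, ρ g⁻¹ y⁆ := by
        rw [LinearMap.comp_apply, hbr g⁻¹, hinv]
      rw [this]
      exact hz (ρ g⁻¹ y)
    · intro x hx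
      refine ⟨ρ g⁻¹ x, ?_, hinv' g x⟩
      intro y
      calc η ⁅ρ g⁻¹ x, y⁆ = η ⁅ρ g⁻¹ x, ρ g⁻¹ (ρ g y)⁆ := by rw [hinv]
        _ = η (ρ g⁻¹ ⁅x, ρ g y⁆) := by rw [hbr]
        _ = 0 := hx (ρ g y)
  -- linear equivalence given by a group element
  have hequiv : ∀ g : G, ∃ e : Q ≃ₗ[ℂ] Q, (e : Q →ₗ[ℂ] Q) = ρ g := by
    intro g
    refine ⟨LinearEquiv.ofLinear (ρ g) (ρ g⁻¹) ?_ ?_, rfl⟩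
    · ext x; exact hinv' g x
    · ext x; exact hinv g x
  have hfrmap : ∀ (g : G) (p : Submodule ℂ Q),
      finrank ℂ (p.map (ρ g)) = finrank ℂ p := by
    intro g p
    obtain ⟨e, he⟩ := hequiv g
    rw [← he]
    exact LinearEquiv.finrank_map_eq e p
  have hfr : ∀ (g : G) (η : Module.Dual ℂ Q),
      finrank ℂ (coadStab ℂ Q (η ∘ₗ ρ g⁻¹)) = finrank ℂ (coadStab ℂ Q η) := by
    intro g η
    rw [← hstabmap, hfrmap]
  have hregconj : ∀ (g : G) (η : Module.Dual ℂ Q),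
      IsRegularDual ℂ Q η → IsRegularDual ℂ Q (η ∘ₗ ρ g⁻¹) := by
    intro g η hη
    rw [IsRegularDual, hfr]
    exact hη
  -- the index is attained
  set m := lieIndex ℂ Q with hmdef
  have hmin : ∀ η : Module.Dual ℂ Q, m ≤ finrank ℂ (coadStab ℂ Q η) := by
    intro η
    exact Nat.sInf_le ⟨η, rfl⟩
  obtain ⟨η0, hη0⟩ : ∃ η0 : Module.Dual ℂ Q, finrank ℂ (coadStab ℂ Q η0) = m := by
    have hne : (Set.range fun η : Module.Dual ℂ Q =>
        finrank ℂ (coadStab ℂ Q η)).Nonempty := ⟨_, ⟨0, rfl⟩⟩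
    obtain ⟨η0, hη0⟩ := Nat.sInf_mem hne
    exact ⟨η0, hη0⟩
  -- rank bookkeeping
  set n := finrank ℂ Q with hndef
  have hsum : ∀ η : Module.Dual ℂ Q,
      finrank ℂ (LinearMap.range (Bmap Q η)) + finrank ℂ (coadStab ℂ Q η) = n := by
    intro η
    rw [← ker_Bmap η]
    exact LinearMap.finrank_range_add_finrank_ker (Bmap Q η)
  set r := finrank ℂ (LinearMap.range (Bmap Q η0)) with hrdef
  have hrm : r + m = n := by rw [hrdef, ← hη0]; exact hsum η0
  have hreg_iff : ∀ η : Module.Dual ℂ Q,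
      IsRegularDual ℂ Q η ↔ r ≤ finrank ℂ (LinearMap.range (Bmap Q η)) := by
    intro η
    have h1 := hsum η
    have h2 := hmin η
    rw [IsRegularDual, ← hmdef]
    omega
  -- the regular set is Zariski-open
  have hBmem : ∀ (v : Q) (φ : Module.Dual ℂ (Module.Dual ℂ Q)),
      (fun η : Module.Dual ℂ Q => φ (Bmap Q η v)) ∈
        Algebra.adjoin ℂ (Set.range fun l : Module.Dual ℂ (Module.Dual ℂ Q) =>
          (l : Module.Dual ℂ Q → ℂ)) := by
    intro v φ
    apply Algebra.subset_adjoin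
    refine ⟨{ toFun := fun η => φ (Bmap Q η v)
              map_add' := by intro a b; simp [map_add]
              map_smul' := by intro c a; simp [map_smul] }, rfl⟩
  have hUopen : zOpen {η : Module.Dual ℂ Q |
      r ≤ finrank ℂ (LinearMap.range (Bmap Q η))} :=
    zOpen_rank (fun η => Bmap Q η) hBmem r
  -- every point of Ω has the same stabiliser dimension as ξ
  have hΩdim : ∀ η ∈ Ω, finrank ℂ (coadStab ℂ Q η) = finrank ℂ (coadStab ℂ Q ξ) := by
    intro η hη
    obtain ⟨g, hg⟩ := hΩconj η hη
    rw [← hg, hfrmap]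
  -- ξ is regular, and so is every point of Ω
  letI : TopologicalSpace (Module.Dual ℂ Q) := zariskiTop (Module.Dual ℂ Q)
  have hΩd : Dense Ω := hΩdense
  have hξreg : IsRegularDual ℂ Q ξ := by
    obtain ⟨η1, hη1U, hη1Ω⟩ := hΩd.inter_open_nonempty
      {η : Module.Dual ℂ Q | r ≤ finrank ℂ (LinearMap.range (Bmap Q η))} hUopen
      ⟨η0, by simp only [Set.mem_setOf_eq, ← hrdef, le_refl]⟩
    have hreg1 : IsRegularDual ℂ Q η1 := (hreg_iff η1).2 hη1U
    rw [IsRegularDual, ← hmdef, ← hΩdim η1 hη1Ω]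
    exact hreg1
  have hΩreg : ∀ η ∈ Ω, IsRegularDual ℂ Q η := by
    intro η hη
    rw [IsRegularDual, hΩdim η hη]
    exact hξreg
  -- the ideal generated by the stabiliser of ξ
  set I : LieSubmodule ℂ Q Q := LieSubmodule.lieSpan ℂ Q ((coadStab ℂ Q ξ : Set Q))
    with hIdef
  set J : Submodule ℂ Q := I.toSubmodule with hJdef
  have hJideal : ∀ x : Q, ∀ w ∈ J, ⁅x, w⁆ ∈ J := by
    intro x w hw
    exact I.lie_mem hw
  have hJstable : ∀ g : G, J.map (ρ g) = J := (hconn J).mpr hJideal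
  have hξJ : coadStab ℂ Q ξ ≤ J := fun x hx => LieSubmodule.subset_lieSpan hx
  have hΩsub : ∀ η ∈ Ω, coadStab ℂ Q η ≤ J := by
    intro η hη
    obtain ⟨g, hg⟩ := hΩconj η hη
    rw [← hg, ← hJstable g]
    exact Submodule.map_mono hξJ
  -- the combined map (B η, π)
  set π : Q →ₗ[ℂ] Q ⧸ J := J.mkQ with hπdef
  set Cc : Q →ₗ[ℂ] (Module.Dual ℂ Q × (Q ⧸ J)) :=
    (LinearMap.inr ℂ (Module.Dual ℂ Q) (Q ⧸ J)) ∘ₗ π with hCcdef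
  set T : Module.Dual ℂ Q →ₗ[ℂ] (Q →ₗ[ℂ] (Module.Dual ℂ Q × (Q ⧸ J))) :=
    (LinearMap.llcomp ℂ Q (Module.Dual ℂ Q) (Module.Dual ℂ Q × (Q ⧸ J))
      (LinearMap.inl ℂ (Module.Dual ℂ Q) (Q ⧸ J))) ∘ₗ (Bmap Q) with hTdef
  have hTC : ∀ (η : Module.Dual ℂ Q) (x : Q),
      (T η + Cc) x = (Bmap Q η x, π x) := by
    intro η x
    simp [hTdef, hCcdef, LinearMap.llcomp_apply, Prod.ext_iff]
  have hkerTC : ∀ η : Module.Dual ℂ Q,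
      LinearMap.ker (T η + Cc) = coadStab ℂ Q η ⊓ J := by
    intro η
    ext x
    rw [LinearMap.mem_ker, hTC, Prod.mk_eq_zero, Submodule.mem_inf, ← ker_Bmap η,
      LinearMap.mem_ker]
    exact and_congr Iff.rfl (by
      rw [hπdef, Submodule.mkQ_apply, Submodule.Quotient.mk_eq_zero])
  have hsumTC : ∀ η : Module.Dual ℂ Q,
      finrank ℂ (LinearMap.range (T η + Cc)) +
        finrank ℂ (LinearMap.ker (T η + Cc)) = n := by
    intro η
    exact LinearMap.finrank_range_add_finrank_ker (T η + Cc)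
  -- "bad" set is open and misses Ω, hence empty
  have hBadOpen : zOpen ({η : Module.Dual ℂ Q |
      r ≤ finrank ℂ (LinearMap.range (Bmap Q η))} ∩
      {η : Module.Dual ℂ Q | r + 1 ≤ finrank ℂ (LinearMap.range (T η + Cc))}) := by
    have hTCmem : ∀ (v : Q) (φ : Module.Dual ℂ (Module.Dual ℂ Q × (Q ⧸ J))),
        (fun η : Module.Dual ℂ Q => φ ((T η + Cc) v)) ∈
          Algebra.adjoin ℂ (Set.range fun l : Module.Dual ℂ (Module.Dual ℂ Q) =>
            (l : Module.Dual ℂ Q → ℂ)) := by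
      intro v φ
      have hdecomp : (fun η : Module.Dual ℂ Q => φ ((T η + Cc) v)) =
          (fun η : Module.Dual ℂ Q => φ (T η v)) +
            (fun _ : Module.Dual ℂ Q => φ (Cc v)) := by
        funext η
        simp [LinearMap.add_apply, map_add]
      rw [hdecomp]
      apply add_mem
      · apply Algebra.subset_adjoin
        refine ⟨{ toFun := fun η => φ (T η v)
                  map_add' := by intro a b; simp [map_add, LinearMap.add_apply]
                  map_smul' := by intro c a; simp [map_smul, LinearMap.smul_apply] }, rfl⟩
      · have hc : (fun _ : Module.Dual ℂ Q => φ (Cc v)) =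
            algebraMap ℂ (Module.Dual ℂ Q → ℂ) (φ (Cc v)) := rfl
        rw [hc]
        exact Subalgebra.algebraMap_mem _ _
    have h2 := zOpen_rank (fun η => T η + Cc) hTCmem (r + 1)
    exact IsOpen.inter hUopen h2
  have hBadΩ : ∀ η ∈ Ω, ¬ (r + 1 ≤ finrank ℂ (LinearMap.range (T η + Cc))) := by
    intro η hη hle
    have hk : LinearMap.ker (T η + Cc) = coadStab ℂ Q η := by
      rw [hkerTC η, inf_eq_left]
      exact hΩsub η hη
    have h1 := hsumTC η
    rw [hk] at h1
    have h2 : finrank ℂ (coadStab ℂ Q η) = m := hΩreg η hη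
    omega
  have hBadEmpty : ∀ η : Module.Dual ℂ Q,
      IsRegularDual ℂ Q η → ¬ (r + 1 ≤ finrank ℂ (LinearMap.range (T η + Cc))) := by
    intro η hη hle
    have hne : ({η' : Module.Dual ℂ Q |
        r ≤ finrank ℂ (LinearMap.range (Bmap Q η'))} ∩
        {η' : Module.Dual ℂ Q |
          r + 1 ≤ finrank ℂ (LinearMap.range (T η' + Cc))}).Nonempty :=
      ⟨η, (hreg_iff η).1 hη, hle⟩
    obtain ⟨η2, hη2bad, hη2Ω⟩ := hΩd.inter_open_nonempty _ hBadOpen hne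
    exact hBadΩ η2 hη2Ω hη2bad.2
  -- every regular stabiliser lies in J
  have hregsub : ∀ η : Module.Dual ℂ Q, IsRegularDual ℂ Q η → coadStab ℂ Q η ≤ J := by
    intro η hη
    have hle : finrank ℂ (LinearMap.range (T η + Cc)) ≤ r := by
      by_contra hcon
      exact hBadEmpty η hη (by omega)
    have h1 := hsumTC η
    have h2 : finrank ℂ (coadStab ℂ Q η) = m := hη
    have hkle : LinearMap.ker (T η + Cc) ≤ coadStab ℂ Q η := by
      rw [hkerTC η]; exact inf_le_left
    have hfle : finrank ℂ (coadStab ℂ Q η) ≤ finrank ℂ (LinearMap.ker (T η + Cc)) := by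
      omega
    have heq : LinearMap.ker (T η + Cc) = coadStab ℂ Q η :=
      Submodule.eq_of_le_of_finrank_le hkle hfle
    rw [← heq, hkerTC η]
    exact inf_le_right
  -- F(q) is G-stable, hence an ideal
  have hFstable : ∀ g : G,
      (frobeniusSemiradical ℂ Q).map (ρ g) = frobeniusSemiradical ℂ Q := by
    intro g
    apply le_antisymm
    · rw [frobeniusSemiradical, Submodule.map_iSup]
      apply iSup_le
      rintro ⟨η, hη⟩
      rw [hstabmap]
      exact le_iSup (fun p : {ξ' : Module.Dual ℂ Q // IsRegularDual ℂ Q ξ'} =>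
        coadStab ℂ Q p.1) ⟨η ∘ₗ ρ g⁻¹, hregconj g η hη⟩
    · rw [frobeniusSemiradical]
      apply iSup_le
      rintro ⟨η, hη⟩
      have hcomp : (η ∘ₗ ρ g) ∘ₗ ρ g⁻¹ = η := by
        ext y
        simp [LinearMap.comp_apply, hinv' g y]
      have h1 : coadStab ℂ Q η = (coadStab ℂ Q (η ∘ₗ ρ g)).map (ρ g) := by
        rw [hstabmap g (η ∘ₗ ρ g), hcomp]
      rw [h1]
      apply Submodule.map_mono
      have hreg' : IsRegularDual ℂ Q (η ∘ₗ ρ g) := by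
        have := hregconj g⁻¹ η hη
        rwa [inv_inv] at this
      exact le_iSup (fun p : {ξ' : Module.Dual ℂ Q // IsRegularDual ℂ Q ξ'} =>
        coadStab ℂ Q p.1) ⟨η ∘ₗ ρ g, hreg'⟩
  have hFideal : ∀ x : Q, ∀ w ∈ frobeniusSemiradical ℂ Q,
      ⁅x, w⁆ ∈ frobeniusSemiradical ℂ Q := (hconn _).mp hFstable
  -- conclude
  apply le_antisymm
  · rw [frobeniusSemiradical]
    apply iSup_le
    rintro ⟨η, hη⟩
    exact hregsub η hη
  · set F' : LieSubmodule ℂ Q Q :=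
      { toSubmodule := frobeniusSemiradical ℂ Q
        lie_mem := fun {x} {w} hw => hFideal x w hw } with hF'def
    have hspan : I ≤ F' := by
      rw [hIdef]
      apply LieSubmodule.lieSpan_le.mpr
      intro x hx
      show x ∈ frobeniusSemiradical ℂ Q
      exact le_iSup (fun p : {ξ' : Module.Dual ℂ Q // IsRegularDual ℂ Q ξ'} =>
        coadStab ℂ Q p.1) ⟨ξ, hξreg⟩ hx
    intro x hx
    exact hspan hx

end
end

section
/- Let n be a nilradical in a complex simple Lie algebra g with optimisation ñ, K(n) = {β₁,…,β_k}, and ξ̄ ∈ n* a cascade point. If n ≠ ñ and γ ∈ C_n(j) := Δ(h_j) \ Δ(n) for some j, then β_j − γ is a root of Δ(n) and the root space g_{β_j − γ} is contained in the stabiliser n^ξ̄. -/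
open Module LieAlgebra
open scoped Classical

noncomputable section

/-- The dimension of a subset of a complex vector space: the (topological) Krull dimension
with respect to the Zariski topology. -/
def zDim {V : Type*} [AddCommGroup V] [Module ℂ V] (s : Set V) : WithBot ℕ∞ :=
  letI := zariskiTop V
  topologicalKrullDim s

/-! ### Exponentials and stabilisers in the concrete model `n* ≅ n⁻` -/

/-- The (truncated) exponential of a nilpotent endomorphism. For `x` in a nilradical `n`,
`nilExp (ad x)` is the adjoint action of the element `exp x` of the unipotent group
`N = exp(n)`; since `exp : n → N` is bijective, every element of `N` is of this form. -/
def nilExp {L : Type*} [AddCommGroup L] [Module ℂ L] (f : Module.End ℂ L) : Module.End ℂ L :=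
  ∑ i ∈ Finset.range (Module.finrank ℂ L + 1), ((i.factorial : ℂ)⁻¹) • f ^ i

/-- For `v ∈ n⁻ ≅ n*`, the stabiliser of the linear functional `κ(v, ·)|_n` inside a (possibly
larger) subalgebra `q`, namely `{x ∈ q | κ(v, [x, n]) = 0}`, where `κ` is the Killing form.
For `q = n` this is the coadjoint stabiliser `n^v`. -/
def killStab {L : Type*} [LieRing L] [LieAlgebra ℂ L] (v : L) (n q : LieSubalgebra ℂ L) :
    Submodule ℂ L where
  carrier := {x | x ∈ q ∧ ∀ y ∈ n, killingForm ℂ L v ⁅x, y⁆ = 0}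
  add_mem' := by
    rintro a b ⟨ha, ha'⟩ ⟨hb, hb'⟩
    refine ⟨q.add_mem ha hb, fun y hy => ?_⟩
    rw [add_lie, map_add, ha' y hy, hb' y hy, add_zero]
  zero_mem' := ⟨q.zero_mem, fun y hy => by rw [zero_lie, map_zero]⟩
  smul_mem' := by
    rintro c x ⟨hx, hx'⟩
    refine ⟨q.smul_mem c hx, fun y hy => ?_⟩
    rw [smul_lie, map_smul, hx' y hy, smul_zero]

/-! ### Triangular decompositions, root data and the Kostant cascade -/

/-- The support of a root (in simple-root coordinates). -/
def fsupp {SR : Type*} [Fintype SR] (γ : SR → ℤ) : Finset SR :=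
  Finset.univ.filter fun a => γ a ≠ 0

/-- The data of a triangular decomposition of a complex simple Lie algebra `L`:
a Cartan subalgebra, a root-space decomposition indexed by the coordinates of the
roots with respect to the simple roots `SR`, the highest root, and a compatible
family of projections onto sums of root spaces. -/
structure TriangularData (L : Type*) [LieRing L] [LieAlgebra ℂ L]
    (SR : Type*) [Fintype SR] [DecidableEq SR] where
  /-- the set of all roots, written in simple-root coordinates -/
  R : Finset (SR → ℤ)
  /-- the root space attached to `γ`; `rs 0` is the Cartan subalgebra, `rs γ = ⊥` off roots -/
  rs : (SR → ℤ) → Submodule ℂ L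
  /-- the Cartan subalgebra `t` -/
  cartan : LieSubalgebra ℂ L
  rs_zero : rs 0 = cartan.toSubmodule
  rs_dim : ∀ γ ∈ R, Module.finrank ℂ (rs γ) = 1
  rs_bot : ∀ γ : SR → ℤ, γ ≠ 0 → γ ∉ R → rs γ = ⊥
  root_ne_zero : ∀ γ ∈ R, γ ≠ 0
  root_neg : ∀ γ ∈ R, -γ ∈ R
  root_pos_or_neg : ∀ γ ∈ R, (∀ a, 0 ≤ γ a) ∨ (∀ a, γ a ≤ 0)
  root_single : ∀ a : SR, Pi.single a 1 ∈ R
  /-- the highest root `θ` -/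
  theta : SR → ℤ
  theta_mem : theta ∈ R
  theta_highest : ∀ γ ∈ R, γ ≤ theta
  bracket_mem : ∀ γ δ : SR → ℤ, ∀ x ∈ rs γ, ∀ y ∈ rs δ, ⁅x, y⁆ ∈ rs (γ + δ)
  isInternal : DirectSum.IsInternal (fun γ : {γ : SR → ℤ // γ = 0 ∨ γ ∈ R} => rs γ.1)
  /-- `proj S` is the projection onto `⊕_{γ ∈ S} rs γ` along `⊕_{γ ∉ S} rs γ` -/
  proj : Set (SR → ℤ) → (L →ₗ[ℂ] L)
  proj_mem : ∀ (S : Set (SR → ℤ)) (x : L), proj S x ∈ ⨆ γ ∈ S, rs γ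
  proj_compl : ∀ (S : Set (SR → ℤ)) (x : L), x - proj S x ∈ ⨆ γ ∈ Sᶜ, rs γ

namespace TriangularData

variable {L : Type*} [LieRing L] [LieAlgebra ℂ L]
  {SR : Type*} [Fintype SR] [DecidableEq SR]
  (td : TriangularData L SR)

/-- The set `Δ⁺` of positive roots. -/
def posR : Finset (SR → ℤ) := td.R.filter fun γ => ∀ a, 0 ≤ γ a

/-- The set of roots `Δ(n_T)` of the nilradical `n_T` attached to a set `T` of simple
roots: the positive roots having a strictly positive coefficient on some element of `T`. -/
def nilRoots (T : Finset SR) : Finset (SR → ℤ) :=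
  td.posR.filter fun γ => ∃ a ∈ T, 0 < γ a

/-- The nilradical `n_T` of the standard parabolic subalgebra `p_T`. -/
def nilrad (T : Finset SR) : LieSubalgebra ℂ L :=
  LieSubalgebra.lieSpan ℂ L (⋃ γ ∈ (td.nilRoots T : Set (SR → ℤ)), (td.rs γ : Set L))

/-- The Borel subalgebra `b = t ⊕ u` (as a subspace). -/
def borelSub : Submodule ℂ L :=
  td.rs 0 ⊔ ⨆ γ ∈ (td.posR : Set (SR → ℤ)), td.rs γ

/-- The parabolic subalgebra `p_T` (as a subspace): everything except `n_T⁻`. -/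
def parabSub (T : Finset SR) : Submodule ℂ L :=
  td.rs 0 ⊔ ⨆ γ ∈ {γ : SR → ℤ | γ ∈ td.R ∧ -γ ∉ td.nilRoots T}, td.rs γ

/-- The set of roots of the opposite nilradical `n_T⁻`. -/
def negSet (T : Finset SR) : Set (SR → ℤ) := (fun γ => -γ) '' (td.nilRoots T : Set (SR → ℤ))

/-- The opposite nilradical `n_T⁻ ⊆ u⁻`, which is identified with `n_T*` via the
Killing form and the decomposition `g = p_T ⊕ n_T⁻`. -/
def negNilSub (T : Finset SR) : Submodule ℂ L := ⨆ γ ∈ td.negSet T, td.rs γ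

/-- The Heisenberg subset `H_β` attached to a positive root `β`: the positive roots in
the root subsystem generated by `supp β` that are not orthogonal to `β`. -/
def heisRoots (β : SR → ℤ) : Finset (SR → ℤ) :=
  td.posR.filter fun γ => fsupp γ ⊆ fsupp β ∧ (γ = β ∨ β - γ ∈ td.R)

/-- `Φ(β) = Π ∩ H_β`. -/
def Phi (β : SR → ℤ) : Finset SR :=
  Finset.univ.filter fun a => Pi.single a 1 ∈ td.heisRoots β

/-- `K` is the Kostant cascade: a maximal set of pairwise strongly orthogonal positive
roots, containing the highest root, such that each `β ∈ K` is the highest root of the root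
subsystem generated by its support and such that the attached Heisenberg subsets
partition `Δ⁺`. -/
structure IsCascade (K : Finset (SR → ℤ)) : Prop where
  subset_pos : K ⊆ td.posR
  theta_mem : td.theta ∈ K
  strong_orth : ∀ β ∈ K, ∀ β' ∈ K, β ≠ β' → β + β' ∉ td.R ∧ β - β' ∉ td.R
  highest : ∀ β ∈ K, ∀ γ ∈ td.posR, fsupp γ ⊆ fsupp β → γ ≤ β
  partition : ∀ γ ∈ td.posR, ∃! β, β ∈ K ∧ γ ∈ td.heisRoots β

/-- `K(n_T) = K ∩ Δ(n_T)`. -/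
def cascadeK (K : Finset (SR → ℤ)) (T : Finset SR) : Finset (SR → ℤ) := K ∩ td.nilRoots T

/-- The set of simple roots of the optimisation of `n_T`, namely
`T̃ = ⋃_{β ∈ K(n_T)} Φ(β)`; the optimisation of `n_T` is `n_{T̃}`. -/
def optT (K : Finset (SR → ℤ)) (T : Finset SR) : Finset SR :=
  (td.cascadeK K T).biUnion td.Phi

/-- The cascade subspace `E = ⊕_{β ∈ K(n_T)} g_{−β} ⊆ n_T⁻ ≅ n_T*`. -/
def cascadeSub (K : Finset (SR → ℤ)) (T : Finset SR) : Submodule ℂ L :=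
  ⨆ β ∈ (td.cascadeK K T : Set (SR → ℤ)), td.rs (-β)

/-- `v = Σ_{β ∈ K(n_T)} e_{−β}` with all `e_{−β} ∈ g_{−β}` nonzero is a cascade point
of `n_T⁻ ≅ n_T*`. -/
def IsCascadePoint (K : Finset (SR → ℤ)) (T : Finset SR) (v : L) : Prop :=
  ∃ e : (SR → ℤ) → L,
    (∀ β ∈ td.cascadeK K T, e β ∈ td.rs (-β) ∧ e β ≠ 0) ∧ v = ∑ β ∈ td.cascadeK K T, e β

/-- `ind n_T`, computed in the model `n_T* ≅ n_T⁻`. -/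
def nilIndex (T : Finset SR) : ℕ :=
  ⨅ v : ↥(td.negNilSub T), Module.finrank ℂ (killStab (v : L) (td.nilrad T) (td.nilrad T))

/-- `v ∈ n_T⁻ ≅ n_T*` is a regular point. -/
def IsRegPoint (T : Finset SR) (v : L) : Prop :=
  v ∈ td.negNilSub T ∧
    Module.finrank ℂ (killStab v (td.nilrad T) (td.nilrad T)) = td.nilIndex T

/-- The Frobenius semiradical `F(n_T) = Σ_{v regular} n_T^v`. -/
def frobNil (T : Finset SR) : Submodule ℂ L :=
  ⨆ v : {v : L // td.IsRegPoint T v}, killStab (v : L) (td.nilrad T) (td.nilrad T)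

/-- `v ∈ n_T⁻ ≅ n_T*` is a generic point for the coadjoint-type action on `n_T*` of the
unipotent group `exp(q)` (where `n_T ⊆ q ⊆ b`): there is a Zariski-dense open subset `Ω`
containing `v` on which all stabilisers (inside `q`) are conjugate under the group
`exp(q) = {exp(ad x) : x ∈ q}` to the stabiliser of `v`.  The stabiliser of such a point is
called a generic stabiliser. -/
def IsGenericStabPoint (T : Finset SR) (q : LieSubalgebra ℂ L) (v : L) : Prop :=
  ∃ Ω : Set ↥(td.negNilSub T), zOpen Ω ∧ zDense Ω ∧
    (∃ hv : v ∈ td.negNilSub T, (⟨v, hv⟩ : ↥(td.negNilSub T)) ∈ Ω) ∧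
    ∀ w ∈ Ω, ∃ x ∈ q,
      (killStab v (td.nilrad T) q).map (nilExp (LieAlgebra.ad ℂ L x)) =
        killStab (w : L) (td.nilrad T) q

/-- The saturation `exp(q)·E ⊆ n_T⁻ ≅ n_T*` of the cascade subspace `E` under the group
`exp(q)`: the coadjoint action is `exp(ad x)` followed by the projection to `n_T⁻`
along `p_T`. -/
def satSet (K : Finset (SR → ℤ)) (T : Finset SR) (q : LieSubalgebra ℂ L) :
    Set ↥(td.negNilSub T) :=
  {w | ∃ x ∈ q, ∃ u ∈ td.cascadeSub K T,
    nilExp (LieAlgebra.ad ℂ L x) u - (w : L) ∈ td.parabSub T}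

/-- The coadjoint action of `exp x` on `n_T* ≅ n_T⁻`: apply `exp(ad x)` and project
back to `n_T⁻` along `p_T`. -/
def coactOn (T : Finset SR) (x : L) (w : ↥(td.negNilSub T)) : ↥(td.negNilSub T) :=
  ⟨td.proj (td.negSet T) (nilExp (LieAlgebra.ad ℂ L x) (w : L)), td.proj_mem _ _⟩

/-- The algebra `S(n_T) = ℂ[n_T*]` of polynomial functions on `n_T* ≅ n_T⁻`. -/
def polyAlg (T : Finset SR) : Subalgebra ℂ (↥(td.negNilSub T) → ℂ) :=
  Algebra.adjoin ℂ
    (Set.range fun l : Module.Dual ℂ ↥(td.negNilSub T) => (l : ↥(td.negNilSub T) → ℂ))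

def invAlg (T : Finset SR) (q : LieSubalgebra ℂ L) : Subalgebra ℂ ↥(td.polyAlg T) where
  carrier := {F | ∀ x ∈ q, ∀ w, (F : ↥(td.negNilSub T) → ℂ) (td.coactOn T x w)
    = (F : ↥(td.negNilSub T) → ℂ) w}
  mul_mem' := by
    intro F G hF hG x hx w
    simp only [Set.mem_setOf_eq] at hF hG
    simp only [MulMemClass.coe_mul, Pi.mul_apply, hF x hx w, hG x hx w]
  add_mem' := by
    intro F G hF hG x hx w
    simp only [Set.mem_setOf_eq] at hF hG
    simp only [AddMemClass.coe_add, Pi.add_apply, hF x hx w, hG x hx w]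
  algebraMap_mem' := by
    intro c x hx w
    rfl

/-- For nested nilradicals `n_Ts ⊆ n_Tb`, the algebra of `exp(q)`-invariants in
`S(n_Ts) ⊆ S(n_Tb)`, realised inside the functions on `n_Tb⁻ ≅ n_Tb*`:
`S(n_Ts)` is generated by the linear functionals factoring through the projection onto
`n_Ts⁻`. -/
def relInv (Tb Ts : Finset SR) (q : LieSubalgebra ℂ L) :
    Subalgebra ℂ (↥(td.negNilSub Tb) → ℂ) where
  carrier := {F | F ∈ Algebra.adjoin ℂ
      {f : ↥(td.negNilSub Tb) → ℂ |
        ∃ l : Module.Dual ℂ L, f = fun w : ↥(td.negNilSub Tb) => l (td.proj (td.negSet Ts) (w : L))} ∧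
      ∀ x ∈ q, ∀ w, F (td.coactOn Tb x w) = F w}
  mul_mem' := by
    rintro F G ⟨hF1, hF2⟩ ⟨hG1, hG2⟩
    refine ⟨mul_mem hF1 hG1, fun x hx w => ?_⟩
    simp only [Pi.mul_apply, hF2 x hx w, hG2 x hx w]
  add_mem' := by
    rintro F G ⟨hF1, hF2⟩ ⟨hG1, hG2⟩
    refine ⟨add_mem hF1 hG1, fun x hx w => ?_⟩
    simp only [Pi.add_apply, hF2 x hx w, hG2 x hx w]
  algebraMap_mem' := by
    intro c
    exact ⟨Subalgebra.algebraMap_mem _ c, fun x hx w => rfl⟩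

end TriangularData

/-- The transcendence degree of a commutative `ℂ`-algebra. -/
def trdegC (A : Type*) [CommRing A] [Algebra ℂ A] : Cardinal :=
  ⨆ s : {s : Set A // AlgebraicIndependent ℂ ((↑) : s → A)}, Cardinal.mk s.1


/-! ### Auxiliary lemmas -/

namespace TriangularData

variable {L : Type*} [LieRing L] [LieAlgebra ℂ L] [FiniteDimensional ℂ L]
  {SR : Type*} [Fintype SR] [DecidableEq SR] (td : TriangularData L SR)

/-- Root spaces for indices not summing to zero are Killing-orthogonal. -/
lemma killing_orth {μ ν : SR → ℤ} (hμν : μ + ν ≠ 0) {u w : L}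
    (hu : u ∈ td.rs μ) (hw : w ∈ td.rs ν) : killingForm ℂ L u w = 0 := by
  by_cases hμ : μ = 0 ∨ μ ∈ td.R
  · by_cases hν : ν = 0 ∨ ν ∈ td.R
    · -- the interesting case: trace argument over the root-space decomposition
      obtain ⟨ρ, hρ⟩ : ∃ ρ, ρ ∈ td.R := by
        rcases hμ with h | h
        · rcases hν with h' | h'
          · exact absurd (by rw [h, h', add_zero]) hμν
          · exact ⟨ν, h'⟩
        · exact ⟨μ, h⟩
      set ι := {γ : SR → ℤ // γ = 0 ∨ γ ∈ td.R}
      let z0 : ι := ⟨0, Or.inl rfl⟩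
      let z1 : ι := ⟨ρ, Or.inr hρ⟩
      have hz01 : z0 ≠ z1 := by
        intro h
        exact td.root_ne_zero ρ hρ (congrArg Subtype.val h).symm
      let σ : ι → ι := fun i =>
        if h : (μ + ν + i.1 = 0 ∨ μ + ν + i.1 ∈ td.R) then ⟨μ + ν + i.1, h⟩
        else if i = z0 then z1 else z0
      have hσ : ∀ i, σ i ≠ i := by
        intro i
        dsimp only [σ]
        split_ifs with h h'
        · intro he
          exact hμν (by
            have := congrArg Subtype.val he
            have h2 : μ + ν + i.1 = i.1 := this
            calc μ + ν = μ + ν + i.1 - i.1 := by ring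
            _ = 0 := by rw [h2]; ring)
        · rw [h']; exact (Ne.symm hz01)
        · exact fun he => h' he.symm
      have hf : ∀ i : ι, Set.MapsTo (LieAlgebra.ad ℂ L u ∘ₗ LieAlgebra.ad ℂ L w)
          (td.rs i.1) (td.rs (σ i).1) := by
        intro i z hz
        have h1 : ⁅w, z⁆ ∈ td.rs (ν + i.1) := td.bracket_mem ν i.1 w hw z hz
        have h2 : ⁅u, ⁅w, z⁆⁆ ∈ td.rs (μ + ν + i.1) := by
          have := td.bracket_mem μ (ν + i.1) u hu _ h1
          rwa [← add_assoc] at this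
        dsimp only [σ]
        split_ifs with h h'
        · simpa using h2
        · have hbot : td.rs (μ + ν + i.1) = ⊥ := by
            push_neg at h
            exact td.rs_bot _ h.1 h.2
          rw [hbot] at h2
          simp only [Submodule.mem_bot] at h2
          simp only [LinearMap.comp_apply, LieAlgebra.ad_apply]
          rw [h2]
          exact (td.rs z1.1).zero_mem
        · have hbot : td.rs (μ + ν + i.1) = ⊥ := by
            push_neg at h
            exact td.rs_bot _ h.1 h.2
          rw [hbot] at h2
          simp only [Submodule.mem_bot] at h2
          simp only [LinearMap.comp_apply, LieAlgebra.ad_apply]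
          rw [h2]
          exact (td.rs z0.1).zero_mem
      rw [killingForm_apply_apply]
      exact LinearMap.trace_eq_zero_of_mapsTo_ne td.isInternal σ hσ hf
    · have hbot : td.rs ν = ⊥ := td.rs_bot ν (fun h => hν (Or.inl h)) (fun h => hν (Or.inr h))
      rw [hbot] at hw
      simp only [Submodule.mem_bot] at hw
      rw [hw, map_zero]
  · have hbot : td.rs μ = ⊥ := td.rs_bot μ (fun h => hμ (Or.inl h)) (fun h => hμ (Or.inr h))
    rw [hbot] at hu
    simp only [Submodule.mem_bot] at hu
    rw [hu, map_zero, LinearMap.zero_apply]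

/-- The nilradical is contained in the sum of its root spaces. -/
lemma nilrad_le_iSup (T : Finset SR) :
    (td.nilrad T : Set L) ⊆ ((⨆ δ ∈ td.nilRoots T, td.rs δ : Submodule ℂ L) : Set L) := by
  set M : Submodule ℂ L := ⨆ δ ∈ td.nilRoots T, td.rs δ with hMdef
  have hadd : ∀ δ ∈ td.nilRoots T, ∀ δ' ∈ td.nilRoots T, td.rs (δ + δ') ≤ M := by
    intro δ hδ δ' hδ'
    obtain ⟨hδpos, a, haT, ha⟩ := Finset.mem_filter.mp hδ
    have hδ'pos := (Finset.mem_filter.mp hδ').1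
    have hnn : ∀ b, 0 ≤ (δ + δ') b := fun b =>
      add_nonneg ((Finset.mem_filter.mp hδpos).2 b) ((Finset.mem_filter.mp hδ'pos).2 b)
    have hpos : 0 < (δ + δ') a := by
      have h2 := (Finset.mem_filter.mp hδ'pos).2 a
      have : (δ + δ') a = δ a + δ' a := rfl
      omega
    by_cases hR : δ + δ' ∈ td.R
    · have hmem : δ + δ' ∈ td.nilRoots T :=
        Finset.mem_filter.mpr ⟨Finset.mem_filter.mpr ⟨hR, hnn⟩, a, haT, hpos⟩
      exact le_iSup₂_of_le (δ + δ') hmem le_rfl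
    · have hne0 : δ + δ' ≠ 0 := fun h => by
        have h2 := congrFun h a
        have h3 : (δ + δ') a = δ a + δ' a := rfl
        have h4 : (0 : SR → ℤ) a = 0 := rfl
        omega
      rw [td.rs_bot _ hne0 hR]
      exact bot_le
  have hstep : ∀ δ ∈ td.nilRoots T, ∀ x ∈ td.rs δ, ∀ y ∈ M, ⁅x, y⁆ ∈ M := by
    intro δ hδ x hx y hy
    have hle : M ≤ Submodule.comap (LieAlgebra.ad ℂ L x) M := by
      refine iSup₂_le fun δ' hδ' => fun z hz => ?_
      simp only [Submodule.mem_comap, LieAlgebra.ad_apply]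
      exact hadd δ hδ δ' hδ' (td.bracket_mem δ δ' x hx z hz)
    simpa using hle hy
  have hbr : ∀ x ∈ M, ∀ y ∈ M, ⁅x, y⁆ ∈ M := by
    let S : Submodule ℂ L :=
      { carrier := {x | ∀ y ∈ M, ⁅x, y⁆ ∈ M}
        add_mem' := fun ha hb y hy => by rw [add_lie]; exact M.add_mem (ha y hy) (hb y hy)
        zero_mem' := fun y hy => by rw [zero_lie]; exact M.zero_mem
        smul_mem' := fun c x hx y hy => by rw [smul_lie]; exact M.smul_mem c (hx y hy) }
    have hS : M ≤ S := iSup₂_le fun δ hδ => fun x hx => hstep δ hδ x hx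
    exact fun x hx => hS hx
  let N : LieSubalgebra ℂ L := { M with lie_mem' := fun {x y} hx hy => hbr x hx y hy }
  have hle : td.nilrad T ≤ N := by
    refine LieSubalgebra.lieSpan_le.mpr ?_
    rintro z hz
    simp only [Set.mem_iUnion] at hz
    obtain ⟨δ, hδ, hzδ⟩ := hz
    have hle2 : td.rs δ ≤ M := le_iSup₂_of_le δ (Finset.mem_coe.mp hδ) le_rfl
    exact hle2 hzδ
  exact fun z hz => hle hz

end TriangularData

/-- Let `n = n_T` be a nilradical with optimisation `ñ` and `ξ̄ = v ∈ n*`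
a cascade point.  If `n ≠ ñ` and `γ ∈ C_n(j) = Δ(h_j) \ Δ(n)` for some `β_j ∈ K(n)`,
then `β_j − γ` is a root of `Δ(n)` and the root space `g_{β_j − γ}` is contained in the
stabiliser `n^ξ̄`. -/
theorem rootSpace_le_cascade_stabiliser
    {L : Type*} [LieRing L] [LieAlgebra ℂ L] [FiniteDimensional ℂ L]
    [LieAlgebra.IsSimple ℂ L]
    {SR : Type*} [Fintype SR] [DecidableEq SR]
    (td : TriangularData L SR)
    (K : Finset (SR → ℤ)) (hK : td.IsCascade K)
    (T : Finset SR) (hne : td.nilrad T ≠ td.nilrad (td.optT K T))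
    (β γ : SR → ℤ) (hβ : β ∈ td.cascadeK K T)
    (hγ : γ ∈ td.heisRoots β) (hγn : γ ∉ td.nilRoots T)
    (v : L) (hv : td.IsCascadePoint K T v) :
    β - γ ∈ td.nilRoots T ∧
    td.rs (β - γ) ≤ killStab v (td.nilrad T) (td.nilrad T) := by
  obtain ⟨hβK, hβn⟩ := Finset.mem_inter.mp hβ
  obtain ⟨hγpos, hsupp, hor⟩ := Finset.mem_filter.mp hγ
  obtain ⟨hγR, hγnonneg⟩ := Finset.mem_filter.mp hγpos
  obtain ⟨hβpos, a, haT, haβ⟩ := Finset.mem_filter.mp hβn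
  -- γ vanishes on T
  have hγT0 : ∀ b ∈ T, γ b = 0 := by
    intro b hb
    have hnot : ¬ (0 < γ b) := by
      intro hlt
      exact hγn (Finset.mem_filter.mpr ⟨hγpos, b, hb, hlt⟩)
    have := hγnonneg b
    omega
  have hγβ : γ ≠ β := fun h => hγn (h ▸ hβn)
  have hβγR : β - γ ∈ td.R := hor.resolve_left hγβ
  have haβγ : 0 < (β - γ) a := by
    have h0 := hγT0 a haT
    have : (β - γ) a = β a - γ a := rfl
    omega
  have hβγnonneg : ∀ b, 0 ≤ (β - γ) b := by
    rcases td.root_pos_or_neg _ hβγR with hp | hn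
    · exact hp
    · exact absurd (hn a) (by omega)
  have hβγpos : β - γ ∈ td.posR := Finset.mem_filter.mpr ⟨hβγR, hβγnonneg⟩
  have hβγnil : β - γ ∈ td.nilRoots T :=
    Finset.mem_filter.mpr ⟨hβγpos, a, haT, haβγ⟩
  -- the key combinatorial fact
  have hkey : ∀ β' ∈ td.cascadeK K T, ∀ δ ∈ td.nilRoots T, β - γ + δ ≠ β' := by
    intro β' hβ' δ hδ heq
    obtain ⟨hβ'K, hβ'n⟩ := Finset.mem_inter.mp hβ'
    have hδpos := (Finset.mem_filter.mp hδ).1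
    have hδR := (Finset.mem_filter.mp hδpos).1
    have hδnonneg := (Finset.mem_filter.mp hδpos).2
    by_cases hbb : β' = β
    · -- then δ = γ, contradicting γ ∉ Δ(n)
      have hδγ : δ = γ := by
        funext b
        have h1 := congrFun heq b
        have h2 : β b - γ b + δ b = β' b := h1
        have h3 : β' b = β b := by rw [hbb]
        omega
      exact hγn (hδγ ▸ hδ)
    · -- β - γ lies in both H_β and H_{β'}, contradicting the partition
      have hsupp2 : fsupp (β - γ) ⊆ fsupp β := by
        intro b hb
        simp only [fsupp, Finset.mem_filter, Finset.mem_univ, true_and] at hb ⊢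
        intro hβb
        have hγb : γ b = 0 := by
          by_contra hne'
          have : b ∈ fsupp γ := by
            simp only [fsupp, Finset.mem_filter, Finset.mem_univ, true_and]
            exact hne'
          have := hsupp this
          simp only [fsupp, Finset.mem_filter, Finset.mem_univ, true_and] at this
          exact this hβb
        have : (β - γ) b = β b - γ b := rfl
        omega
      have hsupp1 : fsupp (β - γ) ⊆ fsupp β' := by
        intro b hb
        simp only [fsupp, Finset.mem_filter, Finset.mem_univ, true_and] at hb ⊢
        have h1 : β b - γ b + δ b = β' b := congrFun heq b
        have h2 := hβγnonneg b
        have h3 := hδnonneg b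
        have h4 : (β - γ) b = β b - γ b := rfl
        omega
      have h1 : β - γ ∈ td.heisRoots β' := by
        refine Finset.mem_filter.mpr ⟨hβγpos, hsupp1, Or.inr ?_⟩
        have : β' - (β - γ) = δ := by
          funext b
          have h1 := congrFun heq b
          have h2 : β b - γ b + δ b = β' b := h1
          have h3 : (β' - (β - γ)) b = β' b - (β b - γ b) := rfl
          omega
        rw [this]; exact hδR
      have h2 : β - γ ∈ td.heisRoots β := by
        refine Finset.mem_filter.mpr ⟨hβγpos, hsupp2, Or.inr ?_⟩
        rw [sub_sub_cancel]
        exact hγR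
      obtain ⟨b, -, hbuniq⟩ := hK.partition (β - γ) hβγpos
      exact hbb ((hbuniq β' ⟨hβ'K, h1⟩).trans (hbuniq β ⟨hβK, h2⟩).symm)
  refine ⟨hβγnil, ?_⟩
  intro x hx
  obtain ⟨e, he, hveq⟩ := hv
  have hxn : x ∈ td.nilrad T := by
    apply LieSubalgebra.subset_lieSpan
    exact Set.mem_iUnion₂.mpr ⟨β - γ, Finset.mem_coe.mpr hβγnil, hx⟩
  have key : (⨆ δ ∈ td.nilRoots T, td.rs δ : Submodule ℂ L) ≤
      LinearMap.ker ((killingForm ℂ L v).comp (LieAlgebra.ad ℂ L x)) := by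
    refine iSup₂_le fun δ hδ => fun z hz => ?_
    simp only [LinearMap.mem_ker, LinearMap.comp_apply, LieAlgebra.ad_apply]
    rw [hveq, map_sum, LinearMap.sum_apply]
    refine Finset.sum_eq_zero fun β' hβ' => ?_
    have hμν : -β' + ((β - γ) + δ) ≠ 0 := by
      intro h0
      refine hkey β' hβ' δ hδ ?_
      funext b
      have h1 := congrFun h0 b
      have h2 : -β' b + (β b - γ b + δ b) = 0 := h1
      have h3 : (β - γ + δ) b = β b - γ b + δ b := rfl
      omega
    exact td.killing_orth hμν (he β' hβ').1 (td.bracket_mem _ _ x hx z hz)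
  refine ⟨hxn, fun y hy => ?_⟩
  have hyM := td.nilrad_le_iSup T hy
  have := key hyM
  simpa only [LinearMap.mem_ker, LinearMap.comp_apply, LieAlgebra.ad_apply] using this

end
end
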